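/- Let z > 0, T > 0, θ₀ ≠ 0 with zθ₀ ∈ [−1, 0) ∪ (0, ∞), D = 3, and M_q(v) = 1/(z^{-1}exp(|v|²/(2T)) + θ₀). If ρ = ∫ M_q dv and 2ρe₀ = ∫ |v|² M_q dv, then (|Li_{3/2}(−zθ₀)|)^{5/2} / (|Li_{5/2}(−zθ₀)|)^{3/2} = |θ₀| ρ (3/(4π e₀))^{3/2}. -/

import Mathlib

/-!
Both moments of `M_q` are radial integrals. In polar coordinates, after the rescaling
`|v|² = 2T x`, the moment `∫ |v|^{2k} M_q` becomes `Γ(3/2+k)/Γ(3/2) (2T)^k (2πT)^{3/2}` times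
`-(1/θ₀) Li_{3/2+k}(-zθ₀)`; the cases `k = 0, 1` are the two moment formulas. For `-zθ₀ ≤ 1`
the integrals defining `Li_{3/2}` and `Li_{5/2}` are positive, so `T` can be eliminated.
-/

open Real MeasureTheory Finset

/-- The polylogarithm, given for `y ≤ 1` by the integral representation
`Li_s(y) = (y/Γ(s)) ∫_0^∞ x^{s-1}/(e^x − y) dx`, which agrees with the power series
`∑_{k=1}^∞ y^k/k^s` for `|y| < 1`. -/
noncomputable def Li (s y : ℝ) : ℝ :=
  y / Real.Gamma s * ∫ x in Set.Ioi (0 : ℝ), x ^ (s - 1) / (Real.exp x - y)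

open Set

theorem integral_rpow_div_exp_sub_eq {s y : ℝ} (hs : 0 < s) (hy : y ≠ 0) :
    ∫ x in Ioi 0, x ^ (s - 1) / (exp x - y) = Gamma s / y * Li s y := by
  rw [Li]
  field_simp [(Gamma_pos_of_pos hs).ne']

theorem rpow_div_exp_sub_le {s x y : ℝ} (hx : 0 < x) (hy : y ≤ 1) :
    x ^ s / (exp x - y) ≤ (x ^ s + x ^ (s - 1)) * exp (-x) := by
  have hexp : x + 1 ≤ exp x := add_one_le_exp x
  have hden : x ≤ exp x - y := by linarith
  have hxs : x ^ s = x ^ (s - 1) * x := by rw [← rpow_add_one hx.ne']; ring_nf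
  rw [hxs, exp_neg, div_le_iff₀ (hx.trans_le hden)]
  have hxs_pos := rpow_pos_of_pos hx (s - 1)
  have hexp_pos := exp_pos x
  -- `x / (eˣ - 1) ≤ (1 + x) e⁻ˣ` is a rearrangement of `1 + x ≤ eˣ`
  field_simp
  nlinarith [mul_le_mul_of_nonneg_left hexp hexp_pos.le]

theorem integrableOn_rpow_div_exp_sub {s y : ℝ} (hs : 0 < s) (hy : y ≤ 1) :
    IntegrableOn (fun x ↦ x ^ s / (exp x - y)) (Ioi 0) := by
  have hbound : IntegrableOn (fun x ↦ (x ^ s + x ^ (s - 1)) * exp (-x)) (Ioi 0) := by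
    have h1 := GammaIntegral_convergent (by linarith : 0 < s + 1)
    have h2 := GammaIntegral_convergent hs
    simp only [add_sub_cancel_right] at h1
    refine (h1.add h2).congr_fun (fun x _ ↦ by simp only [Pi.add_apply]; ring) measurableSet_Ioi
  refine hbound.mono' ?_
    ((ae_restrict_iff' measurableSet_Ioi).2 (.of_forall fun x (hx : 0 < x) ↦ ?_))
  · exact ((measurable_id.pow_const s).div (measurable_exp.sub_const y)).aestronglyMeasurable
  · have hden : 0 < exp x - y := by linarith [add_one_le_exp x]
    rw [norm_of_nonneg (by positivity)]
    exact rpow_div_exp_sub_le hx hy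

theorem integral_rpow_div_exp_sub_pos {s y : ℝ} (hs : 0 < s) (hy : y ≤ 1) :
    0 < ∫ x in Ioi 0, x ^ s / (exp x - y) := by
  have hpos : ∀ x ∈ Ioi (0 : ℝ), 0 < x ^ s / (exp x - y) := fun x (hx : 0 < x) ↦ by
    have : 0 < exp x - y := by linarith [add_one_le_exp x]
    positivity
  rw [setIntegral_pos_iff_support_of_nonneg_ae
    ((ae_restrict_iff' measurableSet_Ioi).2 (.of_forall fun x hx ↦ (hpos x hx).le))
    (integrableOn_rpow_div_exp_sub hs hy),
    inter_eq_right.2 fun x hx ↦ Function.mem_support.2 (hpos x hx).ne', volume_Ioi]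
  exact ENNReal.zero_lt_top

theorem Li_ne_zero {s y : ℝ} (hs : 1 < s) (hy : y ≤ 1) (hy0 : y ≠ 0) : Li s y ≠ 0 :=
  mul_ne_zero (div_ne_zero hy0 (Gamma_pos_of_pos (by linarith)).ne')
    (integral_rpow_div_exp_sub_pos (by linarith) hy).ne'

theorem integral_rpow_mul_comp_div_Ioi (s : ℝ) {c : ℝ} (hc : 0 < c) (h : ℝ → ℝ) :
    ∫ x in Ioi 0, x ^ s * h (x / c) = c ^ (s + 1) * ∫ x in Ioi 0, x ^ s * h x := by
  have := integral_comp_mul_left_Ioi' (fun x ↦ x ^ s * h (x / c)) 0 hc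
  rw [mul_zero] at this
  rw [← this, smul_eq_mul, ← integral_const_mul, ← integral_const_mul]
  refine setIntegral_congr_fun measurableSet_Ioi fun x (hx : 0 < x) ↦ ?_
  rw [mul_div_cancel_left₀ x hc.ne', mul_rpow hc.le hx.le, rpow_add_one hc.ne']
  ring

theorem integral_rpow_mul_comp_sq_Ioi (s : ℝ) (f : ℝ → ℝ) :
    ∫ r in Ioi 0, r ^ s * f (r ^ 2) = 1 / 2 * ∫ x in Ioi 0, x ^ ((s - 1) / 2) * f x := by
  rw [← integral_comp_rpow_Ioi_of_pos (g := fun x ↦ x ^ ((s - 1) / 2) * f x) two_pos,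
    ← integral_const_mul]
  refine setIntegral_congr_fun measurableSet_Ioi fun r (hr : 0 < r) ↦ ?_
  have hpow : (r ^ (2 : ℝ)) ^ ((s - 1) / 2) = r ^ (s - 1) := by
    rw [← rpow_mul hr.le]; ring_nf
  rw [smul_eq_mul, hpow, rpow_two, show r ^ s = r ^ ((2 : ℝ) - 1) * r ^ (s - 1) by
    rw [← rpow_add hr]; ring_nf]
  ring

theorem integral_comp_sq_norm_euclideanSpace {ι : Type*} [Fintype ι] [Nonempty ι] (f : ℝ → ℝ) :
    ∫ v : EuclideanSpace ℝ ι, f (‖v‖ ^ 2) =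
      π ^ ((Fintype.card ι : ℝ) / 2) / Gamma ((Fintype.card ι : ℝ) / 2) *
        ∫ x in Ioi 0, x ^ ((Fintype.card ι : ℝ) / 2 - 1) * f x := by
  have hn : (Fintype.card ι : ℝ) / 2 ≠ 0 := by positivity
  have hball : volume.real (Metric.ball (0 : EuclideanSpace ℝ ι) 1) =
      π ^ ((Fintype.card ι : ℝ) / 2) / Gamma ((Fintype.card ι : ℝ) / 2 + 1) := by
    rw [measureReal_def, EuclideanSpace.volume_ball, ENNReal.ofReal_one, one_pow, one_mul,
      ENNReal.toReal_ofReal (by positivity), sqrt_eq_rpow, ← rpow_natCast, ← rpow_mul pi_pos.le]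
    ring_nf
  have hpow (y : ℝ) : y ^ (Fintype.card ι - 1) • f (y ^ 2) =
      y ^ ((Fintype.card ι : ℝ) - 1) * f (y ^ 2) := by
    rw [smul_eq_mul, ← Nat.cast_pred Fintype.card_pos, rpow_natCast]
  rw [integral_fun_norm_addHaar volume (fun r ↦ f (r ^ 2)), finrank_euclideanSpace, hball,
    nsmul_eq_mul, smul_eq_mul]
  simp only [hpow]
  rw [integral_rpow_mul_comp_sq_Ioi, Gamma_add_one hn]
  field_simp
  ring_nf

theorem integral_comp_sum_sq {ι : Type*} [Fintype ι] [Nonempty ι] (f : ℝ → ℝ) :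
    ∫ v : ι → ℝ, f (∑ i, v i ^ 2) =
      π ^ ((Fintype.card ι : ℝ) / 2) / Gamma ((Fintype.card ι : ℝ) / 2) *
        ∫ x in Ioi 0, x ^ ((Fintype.card ι : ℝ) / 2 - 1) * f x := by
  rw [← integral_comp_sq_norm_euclideanSpace,
    ← (PiLp.volume_preserving_toLp ι).integral_comp (MeasurableEquiv.toLp 2 _).measurableEmbedding]
  simp only [EuclideanSpace.real_norm_sq_eq]

noncomputable def quantumMaxwellian {ι : Type*} [Fintype ι] (z T θ₀ : ℝ) (v : ι → ℝ) : ℝ :=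
  1 / (z⁻¹ * exp ((∑ i, v i ^ 2) / (2 * T)) + θ₀)

section
variable {ι : Type*} [Fintype ι] {z T θ₀ : ℝ}

theorem quantumMaxwellian_nonneg (hz : 0 < z) (hT : 0 ≤ T) (hzθ : -1 ≤ z * θ₀) (v : ι → ℝ) :
    0 ≤ quantumMaxwellian z T θ₀ v := by
  have hexp : 1 ≤ exp ((∑ i, v i ^ 2) / (2 * T)) := one_le_exp (by positivity)
  have : 0 ≤ z⁻¹ * exp ((∑ i, v i ^ 2) / (2 * T)) + θ₀ := by
    rw [← mul_le_mul_iff_of_pos_left hz, mul_zero, mul_add, ← mul_assoc, mul_inv_cancel₀ hz.ne']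
    linarith
  exact one_div_nonneg.2 this

theorem mul_integral_sum_sq_pow_mul_quantumMaxwellian [Nonempty ι] (hz : z ≠ 0) (hT : 0 < T)
    (hθ : θ₀ ≠ 0) (k : ℕ) :
    θ₀ * ∫ v : ι → ℝ, (∑ i, v i ^ 2) ^ k * quantumMaxwellian z T θ₀ v =
      -(Gamma ((Fintype.card ι : ℝ) / 2 + k) / Gamma ((Fintype.card ι : ℝ) / 2) * (2 * T) ^ k *
        (2 * π * T) ^ ((Fintype.card ι : ℝ) / 2) *
        Li ((Fintype.card ι : ℝ) / 2 + k) (-(z * θ₀))) := by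
  set a : ℝ := (Fintype.card ι : ℝ) / 2
  set y : ℝ := -(z * θ₀)
  have hy : y ≠ 0 := neg_ne_zero.2 (mul_ne_zero hz hθ)
  have h2T : 0 < 2 * T := by positivity
  have hM (v : ι → ℝ) : quantumMaxwellian z T θ₀ v = z / (exp ((∑ i, v i ^ 2) / (2 * T)) - y) := by
    rw [quantumMaxwellian]
    field_simp
    ring
  have hpow : ∀ x ∈ Ioi (0 : ℝ), x ^ (a - 1) * (x ^ k * (z / (exp (x / (2 * T)) - y))) =
      z * (x ^ (a + k - 1) * (1 / (exp (x / (2 * T)) - y))) := fun x (hx : 0 < x) ↦ by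
    rw [← rpow_natCast, show a + k - 1 = a - 1 + k by ring, rpow_add hx]
    ring
  simp only [hM]
  rw [integral_comp_sum_sq (fun x ↦ x ^ k * (z / (exp (x / (2 * T)) - y))),
    setIntegral_congr_fun measurableSet_Ioi hpow, integral_const_mul,
    integral_rpow_mul_comp_div_Ioi _ h2T (fun x ↦ 1 / (exp x - y))]
  simp only [mul_one_div]
  rw [integral_rpow_div_exp_sub_eq (by positivity) hy, sub_add_cancel, rpow_add h2T,
    rpow_natCast, mul_rpow (by positivity : (0 : ℝ) ≤ 2 * π) hT.le,
    mul_rpow two_pos.le pi_pos.le, mul_rpow two_pos.le hT.le]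
  simp only [a, y]
  field_simp

theorem mul_integral_quantumMaxwellian [Nonempty ι] (hz : z ≠ 0) (hT : 0 < T) (hθ : θ₀ ≠ 0) :
    θ₀ * ∫ v : ι → ℝ, quantumMaxwellian z T θ₀ v =
      -((2 * π * T) ^ ((Fintype.card ι : ℝ) / 2) * Li ((Fintype.card ι : ℝ) / 2) (-(z * θ₀))) := by
  have hΓ : Gamma ((Fintype.card ι : ℝ) / 2) ≠ 0 := (Gamma_pos_of_pos (by positivity)).ne'
  simpa [hΓ] using mul_integral_sum_sq_pow_mul_quantumMaxwellian (ι := ι) hz hT hθ 0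

theorem mul_integral_sum_sq_mul_quantumMaxwellian [Nonempty ι] (hz : z ≠ 0) (hT : 0 < T)
    (hθ : θ₀ ≠ 0) :
    θ₀ * ∫ v : ι → ℝ, (∑ i, v i ^ 2) * quantumMaxwellian z T θ₀ v =
      -(Fintype.card ι * T * (2 * π * T) ^ ((Fintype.card ι : ℝ) / 2) *
        Li ((Fintype.card ι : ℝ) / 2 + 1) (-(z * θ₀))) := by
  have hn : (Fintype.card ι : ℝ) / 2 ≠ 0 := by positivity
  have hΓ : Gamma ((Fintype.card ι : ℝ) / 2) ≠ 0 := (Gamma_pos_of_pos (by positivity)).ne'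
  have := mul_integral_sum_sq_pow_mul_quantumMaxwellian (ι := ι) hz hT hθ 1
  rw [Nat.cast_one, Gamma_add_one hn, mul_div_assoc, div_self hΓ] at this
  simp only [pow_one] at this
  rw [this]
  ring

end

theorem rpow_div_rpow_eq_of_moments {a b N e T : ℝ} (ha : 0 < a) (hb : 0 < b) (hT : 0 < T)
    (hN : N = (2 * π * T) ^ ((3 : ℝ) / 2) * a)
    (he : 2 * N * e = 3 * T * (2 * π * T) ^ ((3 : ℝ) / 2) * b) :
    a ^ ((5 : ℝ) / 2) / b ^ ((3 : ℝ) / 2) = N * (3 / (4 * π * e)) ^ ((3 : ℝ) / 2) := by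
  have hk : 0 < (2 * π * T) ^ ((3 : ℝ) / 2) := by positivity
  have hratio : 3 / (4 * π * e) = a / (2 * π * T * b) := by
    have : e = 3 * T * b / (2 * a) := by
      rw [eq_div_iff (by positivity)]
      refine mul_left_cancel₀ hk.ne' ?_
      rw [hN] at he
      linear_combination he
    rw [this]; field_simp; ring
  rw [hratio, div_rpow ha.le (by positivity), mul_rpow (by positivity) hb.le, hN,
    show (5 : ℝ) / 2 = 1 + 3 / 2 by norm_num, rpow_add ha, rpow_one]
  field_simp

theorem fugacity_equation (z T θ₀ ρ e₀ : ℝ) (hz : 0 < z) (hT : 0 < T) (hθ : θ₀ ≠ 0)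
    (hzθ : z * θ₀ ∈ Set.Ico (-1 : ℝ) 0 ∪ Set.Ioi (0 : ℝ))
    (Mq : (Fin 3 → ℝ) → ℝ)
    (hMq : ∀ v, Mq v = 1 / (z⁻¹ * Real.exp ((∑ d, (v d) ^ 2) / (2 * T)) + θ₀))
    (hmass : ρ = ∫ v, Mq v)
    (henergy : 2 * ρ * e₀ = ∫ v : Fin 3 → ℝ, (∑ d, (v d) ^ 2) * Mq v) :
    |Li (3 / 2) (-(z * θ₀))| ^ ((5 : ℝ) / 2) / |Li (5 / 2) (-(z * θ₀))| ^ ((3 : ℝ) / 2) =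
      |θ₀| * ρ * (3 / (4 * π * e₀)) ^ ((3 : ℝ) / 2) := by
  have hzθ' : -1 ≤ z * θ₀ := hzθ.elim (·.1) fun h ↦ (neg_one_lt_zero.trans h).le
  have hy0 : -(z * θ₀) ≠ 0 := neg_ne_zero.2 (mul_ne_zero hz.ne' hθ)
  obtain rfl : Mq = quantumMaxwellian z T θ₀ := funext hMq
  have hM0 := quantumMaxwellian_nonneg hz hT.le hzθ' (ι := Fin 3)
  have hρ0 : 0 ≤ ρ := hmass ▸ integral_nonneg hM0
  have hE0 : 0 ≤ 2 * ρ * e₀ :=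
    henergy ▸ integral_nonneg fun v ↦ mul_nonneg (by positivity) (hM0 v)
  have hN : |θ₀| * ρ = (2 * π * T) ^ ((3 : ℝ) / 2) * |Li (3 / 2) (-(z * θ₀))| := by
    have := mul_integral_quantumMaxwellian (ι := Fin 3) hz.ne' hT hθ
    rw [← abs_of_nonneg hρ0, ← abs_mul, hmass, this]
    norm_num [abs_mul, abs_of_pos (by positivity : 0 < (2 * π * T) ^ ((3 : ℝ) / 2))]
  have hE : 2 * (|θ₀| * ρ) * e₀ =
      3 * T * (2 * π * T) ^ ((3 : ℝ) / 2) * |Li (5 / 2) (-(z * θ₀))| := by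
    have := mul_integral_sum_sq_mul_quantumMaxwellian (ι := Fin 3) hz.ne' hT hθ
    rw [show 2 * (|θ₀| * ρ) * e₀ = |θ₀ * (2 * ρ * e₀)| by rw [abs_mul, abs_of_nonneg hE0]; ring,
      henergy, this]
    norm_num [abs_mul, abs_of_pos hT, abs_of_pos (by positivity : 0 < (2 * π * T) ^ ((3 : ℝ) / 2))]
  exact rpow_div_rpow_eq_of_moments (abs_pos.2 (Li_ne_zero (by norm_num) (by linarith) hy0))
    (abs_pos.2 (Li_ne_zero (by norm_num) (by linarith) hy0)) hT hN hE
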